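/- Suppose f : ℂ → ℂ is continuous on the closed second quadrant D̄₂, and there exist functions g_T : D̄₂ → ℂ (for T ≥ 0) and a constant C such that sup_{k ∈ D̄₂} |g_T(k) − f(k)| ≤ C/(1+T), each g_T is nonvanishing on D̄₂ for T large enough, and both f and g_T tend to 1 at infinity in D̄₂ uniformly in T, with f analytic in the open quadrant D₂ and each g_T analytic in D₂. Then f is nonvanishing on D̄₂ provided f is nonvanishing on ∂D₂. -/

import Mathlib

/-- The closed second quadrant. -/
def closedD2 : Set ℂ := {k : ℂ | k.re ≤ 0 ∧ 0 ≤ k.im}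

/-- The open second quadrant. -/
def openD2 : Set ℂ := {k : ℂ | k.re < 0 ∧ 0 < k.im}

/-- The boundary of the second quadrant. -/
def bdryD2 : Set ℂ := {k : ℂ | (k.im = 0 ∧ k.re ≤ 0) ∨ (k.re = 0 ∧ 0 ≤ k.im)}

/-!
Suppose `f` vanished at some `k`. On the boundary it does not, so `k` lies in the open quadrant.
Since `f → 1` at infinity, `f` is not identically zero there, so the zero at `k` is isolated and
`|f|` is bounded below by some `δ > 0` on a small circle around `k` inside the quadrant. For `T`
large, `|g_T - f| < δ / 2` there, so `|f - g_T| < |g_T|` on the circle (Rouché's condition).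
The maximum modulus principle applied to `f / g_T - 1` then gives `|f(k) / g_T(k) - 1| < 1`,
which is impossible if `f(k) = 0`.
-/

open Metric Filter Topology

theorem Complex.ne_zero_of_forall_mem_frontier_norm_sub_lt {E : Type*} [NormedAddCommGroup E]
    [NormedSpace ℂ E] [Nontrivial E] [FiniteDimensional ℂ E] {f g : E → ℂ} {U : Set E}
    (hU : Bornology.IsBounded U) (hf : DiffContOnCl ℂ f U) (hg : DiffContOnCl ℂ g U)
    (hg₀ : ∀ z ∈ closure U, g z ≠ 0) (hfg : ∀ z ∈ frontier U, ‖f z - g z‖ < ‖g z‖) {k : E}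
    (hk : k ∈ closure U) : f k ≠ 0 := by
  set F : E → ℂ := fun z => f z / g z - 1
  have hF : DiffContOnCl ℂ F U := (hf.smul (hg.inv hg₀)).sub_const 1
  obtain ⟨z₀, hz₀, hmax⟩ :=
    Complex.exists_mem_frontier_isMaxOn_norm hU (closure_nonempty_iff.1 ⟨k, hk⟩) hF
  have hg₀z₀ : g z₀ ≠ 0 := hg₀ z₀ (frontier_subset_closure hz₀)
  have hFz₀ : ‖F z₀‖ < 1 := by
    rw [show F z₀ = (f z₀ - g z₀) / g z₀ from div_sub_one hg₀z₀, norm_div,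
      div_lt_one (norm_pos_iff.2 hg₀z₀)]
    exact hfg z₀ hz₀
  intro hfk
  have hFk : ‖F k‖ ≤ ‖F z₀‖ := hmax hk
  simp only [F, hfk, zero_div, zero_sub, norm_neg, norm_one] at hFk
  linarith

theorem AnalyticOnNhd.exists_closedBall_subset_forall_mem_sphere_ne_zero {𝕜 E : Type*}
    [NontriviallyNormedField 𝕜] [NormedAddCommGroup E] [NormedSpace 𝕜 E] {f : 𝕜 → E} {U : Set 𝕜}
    (hf : AnalyticOnNhd 𝕜 f U) (hU : IsPreconnected U) (hUo : IsOpen U) {z₀ k : 𝕜} (hz₀ : z₀ ∈ U)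
    (hfz₀ : f z₀ ≠ 0) (hk : k ∈ U) : ∃ r > 0, closedBall k r ⊆ U ∧ ∀ z ∈ sphere k r, f z ≠ 0 := by
  have hne : ∀ᶠ z in 𝓝[≠] k, f z ≠ 0 :=
    not_frequently.1 fun h => hfz₀ (hf.eqOn_zero_of_preconnected_of_frequently_eq_zero hU hk h hz₀)
  rw [eventually_nhdsWithin_iff] at hne
  obtain ⟨r, hr, hball⟩ := nhds_basis_closedBall.eventually_iff.1 (hne.and (hUo.mem_nhds hk))
  exact ⟨r, hr, fun z hz => (hball hz).2,
    fun z hz => (hball (sphere_subset_closedBall hz)).1 (ne_of_mem_sphere hz hr.ne')⟩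

theorem norm_sub_lt_norm_of_norm_sub_lt_half {E : Type*} [SeminormedAddCommGroup E] {a b : E}
    {δ : ℝ} (ha : δ ≤ ‖a‖) (hab : ‖b - a‖ < δ / 2) : ‖a - b‖ < ‖b‖ := by
  rw [norm_sub_rev] at hab
  linarith [norm_sub_norm_le a b]

theorem eventually_div_one_add_lt (C : ℝ) {ε : ℝ} (hε : 0 < ε) :
    ∀ᶠ T : ℝ in atTop, C / (1 + T) < ε :=
  (tendsto_const_nhds.div_atTop (tendsto_atTop_add_const_left _ 1 tendsto_id)).eventually
    (gt_mem_nhds hε)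

theorem isOpen_openD2 : IsOpen openD2 :=
  (isOpen_lt Complex.continuous_re continuous_const).inter
    (isOpen_lt continuous_const Complex.continuous_im)

theorem convex_openD2 : Convex ℝ openD2 :=
  (convex_halfSpace_re_lt 0).inter (convex_halfSpace_im_gt 0)

theorem openD2_subset_closedD2 : openD2 ⊆ closedD2 :=
  fun _ hk => ⟨hk.1.le, hk.2.le⟩

theorem closedD2_diff_bdryD2_subset_openD2 : closedD2 \ bdryD2 ⊆ openD2 :=
  fun _ ⟨hk, hb⟩ => ⟨hk.1.lt_of_ne fun h => hb (Or.inr ⟨h, hk.2⟩),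
    hk.2.lt_of_ne fun h => hb (Or.inl ⟨h.symm, hk.1⟩)⟩

theorem exists_mem_openD2_le_norm (R : ℝ) : ∃ z ∈ openD2, R ≤ ‖z‖ := by
  set M := max R 1
  have hM : 0 < M := lt_of_lt_of_le one_pos (le_max_right R 1)
  refine ⟨⟨-M, M⟩, ⟨neg_lt_zero.2 hM, hM⟩, ?_⟩
  calc R ≤ |M| := (le_max_left R 1).trans (le_abs_self M)
    _ ≤ ‖(⟨-M, M⟩ : ℂ)‖ := Complex.abs_im_le_norm ⟨-M, M⟩

theorem nonvanishing_from_approximation_general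
    (f : ℂ → ℂ) (g : ℝ → ℂ → ℂ) (C : ℝ)
    (hf_anal : DifferentiableOn ℂ f openD2)
    (hg_anal : ∀ T : ℝ, 0 ≤ T → DifferentiableOn ℂ (g T) openD2)
    (happrox : ∀ T : ℝ, 0 ≤ T → ∀ k ∈ closedD2,
      ‖g T k - f k‖ ≤ C / (1 + T))
    (hg_nz : ∃ T₀ : ℝ, 0 ≤ T₀ ∧ ∀ T ≥ T₀, ∀ k ∈ closedD2, g T k ≠ 0)
    (hf_lim : ∀ ε > 0, ∃ R, ∀ k ∈ closedD2, R ≤ ‖k‖ →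
      ‖f k - 1‖ < ε)
    (hf_bd : ∀ k ∈ bdryD2, f k ≠ 0) :
    ∀ k ∈ closedD2, f k ≠ 0 := by
  intro k hk hfk
  have hko : k ∈ openD2 := closedD2_diff_bdryD2_subset_openD2 ⟨hk, fun hb => hf_bd k hb hfk⟩
  obtain ⟨R, hR⟩ := hf_lim 1 one_pos
  obtain ⟨z₀, hz₀, hRz₀⟩ := exists_mem_openD2_le_norm R
  have hfz₀ : f z₀ ≠ 0 := fun h => by
    simpa [h] using hR z₀ (openD2_subset_closedD2 hz₀) hRz₀
  obtain ⟨r, hr, hball, hsphere⟩ :=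
    (hf_anal.analyticOnNhd isOpen_openD2).exists_closedBall_subset_forall_mem_sphere_ne_zero
      convex_openD2.isPreconnected isOpen_openD2 hz₀ hfz₀ hko
  obtain ⟨δ, hδ, hfδ⟩ := (isCompact_sphere k r).exists_forall_le'
    (hf_anal.continuousOn.mono (sphere_subset_closedBall.trans hball)).norm
    (fun z hz => norm_pos_iff.2 (hsphere z hz))
  obtain ⟨T₀, -, hgT₀⟩ := hg_nz
  obtain ⟨T, hT, hT₀, hCδ⟩ := ((eventually_ge_atTop 0).and
    ((eventually_ge_atTop T₀).and (eventually_div_one_add_lt C (half_pos hδ)))).exists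
  refine Complex.ne_zero_of_forall_mem_frontier_norm_sub_lt isBounded_ball
    (hf_anal.diffContOnCl_ball hball) ((hg_anal T hT).diffContOnCl_ball hball)
    (fun z hz => hgT₀ T hT₀ z (openD2_subset_closedD2 (hball (closure_ball_subset_closedBall hz))))
    (fun z hz => ?_) (subset_closure (mem_ball_self hr)) hfk
  rw [frontier_ball k hr.ne'] at hz
  exact norm_sub_lt_norm_of_norm_sub_lt_half (hfδ z hz) <|
    (happrox T hT z (openD2_subset_closedD2 (hball (sphere_subset_closedBall hz)))).trans_lt hCδ

theorem nonvanishing_from_approximation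
    (f : ℂ → ℂ) (g : ℝ → ℂ → ℂ) (C : ℝ)
    (hf_cont : ContinuousOn f closedD2)
    (hf_anal : DifferentiableOn ℂ f openD2)
    (hg_anal : ∀ T : ℝ, 0 ≤ T → DifferentiableOn ℂ (g T) openD2)
    (hg_cont : ∀ T : ℝ, 0 ≤ T → ContinuousOn (g T) closedD2)
    (happrox : ∀ T : ℝ, 0 ≤ T → ∀ k ∈ closedD2,
      ‖g T k - f k‖ ≤ C / (1 + T))
    (hg_nz : ∃ T₀ : ℝ, 0 ≤ T₀ ∧ ∀ T ≥ T₀, ∀ k ∈ closedD2, g T k ≠ 0)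
    (hf_lim : ∀ ε > 0, ∃ R, ∀ k ∈ closedD2, R ≤ ‖k‖ →
      ‖f k - 1‖ < ε)
    (hg_lim : ∀ ε > 0, ∃ R, ∀ T : ℝ, 0 ≤ T → ∀ k ∈ closedD2,
      R ≤ ‖k‖ → ‖g T k - 1‖ < ε)
    (hf_bd : ∀ k ∈ bdryD2, f k ≠ 0) :
    ∀ k ∈ closedD2, f k ≠ 0 :=
  nonvanishing_from_approximation_general f g C hf_anal hg_anal happrox hg_nz hf_lim hf_bd
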